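/- Every nonzero F_{q^N}-linear combination of rows of the Moore matrix G_k (with g_1,...,g_n linearly independent over F_q, n ≤ N, k < n) is a vector whose coordinates span an F_q-subspace of dimension at least n − k + 1. -/

import Mathlib

/-- Rank norm of a vector over the base field `K`. -/
noncomputable def rankNorm (K : Type*) {L : Type*} [Field K] [Field L] [Algebra K L]
    {n : ℕ} (x : Fin n → L) : ℕ :=
  Module.finrank K (Submodule.span K (Set.range x))

/-!
With `q = #K`, the map `x ↦ ∑ aᵢ x^(qⁱ)` is `K`-linear (a combination of powers of the Frobenius
`x ↦ x^q`), and the coordinates of the combination are its values at the `gⱼ`, so they span the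
image of `V = span_K {gⱼ}`, an `n`-dimensional space. Every element of the kernel is a root of the
nonzero polynomial `∑ aᵢ X^(qⁱ)` of degree at most `q^(k-1)`, so a kernel of dimension `d` has
`q^d ≤ q^(k-1)` elements, i.e. `d < k`; rank–nullity on `V` gives an image of dimension
at least `n - k + 1`.
-/

open Module Polynomial

theorem Submodule.finrank_map_add_finrank_inf_ker {K V V₂ : Type*} [DivisionRing K]
    [AddCommGroup V] [Module K V] [AddCommGroup V₂] [Module K V₂]
    (W : Submodule K V) [FiniteDimensional K W] (f : V →ₗ[K] V₂) :
    finrank K (W.map f) + finrank K ↥(W ⊓ LinearMap.ker f) = finrank K W := by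
  rw [← LinearMap.range_domRestrict, ← (f.domRestrict W).finrank_range_add_finrank_ker,
    LinearMap.ker_domRestrict, ← Submodule.finrank_map_subtype_eq, Submodule.map_comap_subtype,
    inf_comm]

section Linearized

variable {K L : Type*} [Field K] [Fintype K] [Field L] {k : ℕ}

theorem pow_finrank_le_natDegree_of_forall_eval_eq_zero [Algebra K L] {W : Submodule K L}
    [FiniteDimensional K W] {P : L[X]} (hP : P ≠ 0) (hW : ∀ x ∈ W, P.eval x = 0) :
    Fintype.card K ^ finrank K W ≤ P.natDegree := by
  have hWroots : (W : Set L) ⊆ P.rootSet L := fun x hx ↦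
    (mem_rootSet_of_ne hP).2 (by simpa using hW x hx)
  calc Fintype.card K ^ finrank K W = Nat.card W := by
        rw [Module.natCard_eq_pow_finrank (K := K), Nat.card_eq_fintype_card]
    _ = (W : Set L).ncard := Nat.card_coe_set_eq _
    _ ≤ (P.rootSet L).ncard := Set.ncard_le_ncard hWroots (P.rootSet_finite L)
    _ ≤ P.natDegree := P.ncard_rootSet_le L

variable (K) in
noncomputable def linearizedPolynomial (a : Fin k → L) : L[X] :=
  ∑ i : Fin k, C (a i) * X ^ Fintype.card K ^ (i : ℕ)

theorem linearizedPolynomial_ne_zero {a : Fin k → L} (ha : a ≠ 0) :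
    linearizedPolynomial K a ≠ 0 := by
  obtain ⟨i₀, hi₀⟩ := Function.ne_iff.1 ha
  have hinj : Function.Injective fun i : Fin k ↦ Fintype.card K ^ (i : ℕ) :=
    (Nat.pow_right_injective Fintype.one_lt_card).comp Fin.val_injective
  intro h
  apply hi₀
  have hcoeff := congrArg (coeff · (Fintype.card K ^ (i₀ : ℕ))) h
  simpa only [linearizedPolynomial, finsetSum_coeff, coeff_C_mul, coeff_X_pow, hinj.eq_iff,
    mul_ite, mul_one, mul_zero, Finset.sum_ite_eq, Finset.mem_univ, if_true, coeff_zero,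
    Pi.zero_apply] using hcoeff

theorem natDegree_linearizedPolynomial_le (a : Fin k → L) :
    (linearizedPolynomial K a).natDegree ≤ Fintype.card K ^ (k - 1) := by
  refine natDegree_sum_le_of_forall_le _ _ fun i _ ↦ (natDegree_C_mul_X_pow_le _ _).trans ?_
  exact Nat.pow_le_pow_right Fintype.card_pos (by omega)

variable (K) [Algebra K L] in
def linearizedMap (a : Fin k → L) : L →ₗ[K] L :=
  ∑ i : Fin k, a i • ((FiniteField.frobeniusAlgHom K L) ^ (i : ℕ)).toLinearMap

theorem linearizedMap_apply [Algebra K L] (a : Fin k → L) (x : L) :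
    linearizedMap K a x = ∑ i : Fin k, a i * x ^ Fintype.card K ^ (i : ℕ) := by
  simp [linearizedMap, FiniteField.coe_frobeniusAlgHom, pow_iterate]

theorem eval_linearizedPolynomial [Algebra K L] (a : Fin k → L) (x : L) :
    (linearizedPolynomial K a).eval x = linearizedMap K a x := by
  simp [linearizedPolynomial, linearizedMap_apply, eval_finsetSum]

theorem finrank_inf_ker_linearizedMap_lt [Algebra K L] {a : Fin k → L} (ha : a ≠ 0)
    (W : Submodule K L) [FiniteDimensional K W] :
    finrank K ↥(W ⊓ LinearMap.ker (linearizedMap K a)) < k := by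
  have hk : k ≠ 0 := by rintro rfl; exact ha (Subsingleton.elim _ _)
  suffices finrank K ↥(W ⊓ LinearMap.ker (linearizedMap K a)) ≤ k - 1 by omega
  refine (Nat.pow_le_pow_iff_right Fintype.one_lt_card).1 <|
    (pow_finrank_le_natDegree_of_forall_eval_eq_zero (linearizedPolynomial_ne_zero ha)
      fun x hx ↦ ?_).trans (natDegree_linearizedPolynomial_le a)
  rw [eval_linearizedPolynomial]
  exact hx.2

end Linearized

theorem moore_combination_rank_ge_general (K L : Type*) [Field K] [Fintype K] [Field L]
    [Algebra K L] (n k : ℕ) (hkn : k < n)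
    (g : Fin n → L) (hg : LinearIndependent K g)
    (a : Fin k → L) (ha : a ≠ 0) :
    n - k + 1 ≤ rankNorm K (fun (j : Fin n) => ∑ i : Fin k, a i * g j ^ (Fintype.card K) ^ (i : ℕ)) := by
  set V := Submodule.span K (Set.range g)
  have : FiniteDimensional K V := .span_of_finite K (Set.finite_range g)
  have hV : finrank K V = n := by rw [finrank_span_eq_card hg, Fintype.card_fin]
  have hspan : Submodule.span K (Set.range fun j ↦ ∑ i : Fin k, a i * g j ^ Fintype.card K ^ (i : ℕ))
      = V.map (linearizedMap K a) := by
    rw [Submodule.map_span, ← Set.range_comp]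
    simp only [Function.comp_def, linearizedMap_apply]
  have hrankNullity := V.finrank_map_add_finrank_inf_ker (linearizedMap K a)
  have hker := finrank_inf_ker_linearizedMap_lt ha V
  rw [rankNorm, hspan]
  omega

/-- every nonzero `F_{q^N}`-linear combination of rows of the Moore matrix
spans an `F_q`-subspace of dimension at least `n − k + 1`. -/
theorem moore_combination_rank_ge (K L : Type*) [Field K] [Fintype K] [Field L] [Fintype L]
    [Algebra K L] (n k : ℕ) (hn : n ≤ Module.finrank K L) (hkn : k < n)
    (g : Fin n → L) (hg : LinearIndependent K g)
    (a : Fin k → L) (ha : a ≠ 0) :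
    n - k + 1 ≤ rankNorm K (fun (j : Fin n) => ∑ i : Fin k, a i * g j ^ (Fintype.card K) ^ (i : ℕ)) :=
  moore_combination_rank_ge_general K L n k hkn g hg a ha
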